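/- arXiv:2311.03949 — 4 statements merged into one kernel-verified Lean document; each statement's English description precedes it below -/
import Mathlib

section
/- Let A and B be N×N complex matrices. The product A†B is lower triangular if and only if there exists a unitary matrix Q such that Q†A is upper triangular and Q†B is lower triangular. -/
/-!
With `aⱼ`, `bⱼ` the columns of `A`, `B`, the hypothesis reads `⟪aᵢ, bⱼ⟫ = 0` for `i < j`, and the
columns `qᵢ` of `Q` must form an orthonormal basis with `aⱼ ∈ span {qᵢ | i ≤ j}` and `qᵢ ⟂ bⱼ` for
`i < j`. The subspaces `Wₖ = span {bⱼ | j > k}ᗮ` increase with `k`, contain `aₖ` and have dimension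
at least `k + 1`. Choose recursively `fₖ ∈ Wₖ` outside `span {fᵢ | i < k}` with `aₖ` in
`span {fᵢ | i ≤ k}`: take `fₖ = aₖ` unless `aₖ` already lies in that span, in which case a dimension
count yields a suitable vector of `Wₖ`. Gram–Schmidt turns `f` into the required `q`. Conversely,
`Aᴴ * B = (Qᴴ * A)ᴴ * (Qᴴ * B)` is a product of two lower triangular matrices.
-/

open Matrix Submodule Module InnerProductSpace

section LinearAlgebra

variable {ι K E : Type*} [LinearOrder ι] [Field K] [AddCommGroup E] [Module K E]

theorem linearIndependent_of_notMem_span_Iio {f : ι → E}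
    (hf : ∀ k, f k ∉ span K (f '' Set.Iio k)) : LinearIndependent K f := by
  rw [linearIndependent_iff']
  intro s g hsum
  induction s using Finset.induction_on_max with
  | empty => simp
  | insert k s hlt ih =>
    rw [Finset.sum_insert (fun hk => lt_irrefl k (hlt k hk))] at hsum
    have hgk : g k = 0 := by
      by_contra hgk
      refine hf k ((smul_mem_iff _ hgk).1 ?_)
      rw [eq_neg_of_add_eq_zero_left hsum]
      exact neg_mem (sum_mem fun i hi => smul_mem _ _ (subset_span ⟨i, hlt i hi, rfl⟩))
    rw [hgk, zero_smul, zero_add] at hsum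
    intro i hi
    rcases Finset.mem_insert.1 hi with rfl | hi
    · exact hgk
    · exact ih hsum i hi

theorem exists_mem_and_mem_sup_span_singleton [FiniteDimensional K E] (P : Submodule K E)
    {W : Submodule K E} {a : E} (ha : a ∈ W) :
    ∃ v ∈ W, a ∈ P ⊔ K ∙ v ∧ (finrank K P < finrank K W → v ∉ P) := by
  by_cases h : a ∈ P ∧ finrank K P < finrank K W
  · obtain ⟨v, hvW, hvP⟩ := SetLike.not_le_iff_exists.1 fun hWP =>
      (finrank_mono hWP).not_gt h.2
    exact ⟨v, hvW, mem_sup_left h.1, fun _ => hvP⟩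
  · exact ⟨a, ha, mem_sup_right (mem_span_singleton_self a), fun hP haP => h ⟨haP, hP⟩⟩

theorem exists_linearIndependent_mem_and_mem_span_Iic [LocallyFiniteOrderBot ι] [WellFoundedLT ι]
    [FiniteDimensional K E] {a : ι → E} {W : ι → Submodule K E} (ha : ∀ k, a k ∈ W k)
    (hW : ∀ k, (Finset.Iio k).card < finrank K (W k)) :
    ∃ f : ι → E, LinearIndependent K f ∧ (∀ k, f k ∈ W k) ∧
      ∀ k, a k ∈ span K (f '' Set.Iic k) := by
  choose next hnextW hnexta hnextP using
    fun k (P : Submodule K E) => exists_mem_and_mem_sup_span_singleton P (ha k)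
  let f : ι → E :=
    wellFounded_lt.fix fun k g => next k (span K (Set.range fun j : Set.Iio k => g j j.2))
  have hf : ∀ k, f k = next k (span K (f '' Set.Iio k)) := fun k => by
    simp only [f]
    rw [wellFounded_lt.fix_eq, Set.image_eq_range]
  have hrank : ∀ k, finrank K (span K (f '' Set.Iio k)) < finrank K (W k) := fun k => by
    classical
    refine lt_of_le_of_lt ?_ (hW k)
    rw [← Finset.coe_Iio, ← Finset.coe_image]
    exact (finrank_span_finset_le_card _).trans Finset.card_image_le
  refine ⟨f, linearIndependent_of_notMem_span_Iio fun k => ?_, fun k => ?_,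
    fun k => ?_⟩
  · rw [hf k]; exact hnextP k _ (hrank k)
  · rw [hf k]; exact hnextW k _
  · rw [← Set.Iio_insert, Set.image_insert_eq, span_insert, sup_comm, hf k]
    exact hnexta k _

end LinearAlgebra

section InnerProductSpace

variable {𝕜 E : Type*} [RCLike 𝕜] [NormedAddCommGroup E] [InnerProductSpace 𝕜 E]
  [FiniteDimensional 𝕜 E]

theorem exists_orthonormal_mem_and_mem_span_Iic {ι : Type*} [LinearOrder ι]
    [LocallyFiniteOrderBot ι] [WellFoundedLT ι] {a : ι → E} {W : ι → Submodule 𝕜 E}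
    (hWmono : Monotone W) (ha : ∀ k, a k ∈ W k)
    (hW : ∀ k, (Finset.Iio k).card < finrank 𝕜 (W k)) :
    ∃ q : ι → E, Orthonormal 𝕜 q ∧ (∀ k, q k ∈ W k) ∧ ∀ k, a k ∈ span 𝕜 (q '' Set.Iic k) := by
  obtain ⟨f, hf, hfW, haf⟩ := exists_linearIndependent_mem_and_mem_span_Iic ha hW
  have hspan : ∀ k, span 𝕜 (gramSchmidtNormed 𝕜 f '' Set.Iic k) = span 𝕜 (f '' Set.Iic k) :=
    fun k => by rw [span_gramSchmidtNormed, span_gramSchmidt_Iic]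
  refine ⟨gramSchmidtNormed 𝕜 f, gramSchmidtNormed_orthonormal hf, fun k => ?_, fun k => ?_⟩
  · have hle : span 𝕜 (f '' Set.Iic k) ≤ W k :=
      span_le.2 <| Set.image_subset_iff.2 fun j hj => hWmono hj (hfW j)
    exact hle (hspan k ▸ subset_span (Set.mem_image_of_mem _ (Set.mem_Iic.2 le_rfl)))
  · rw [hspan]; exact haf k

theorem exists_orthonormal_inner_triangular {N : ℕ} (hN : N ≤ finrank 𝕜 E) (a b : Fin N → E)
    (hab : ∀ i j, i < j → ⟪a i, b j⟫_𝕜 = 0) :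
    ∃ q : Fin N → E, Orthonormal 𝕜 q ∧ (∀ i j, j < i → ⟪q i, a j⟫_𝕜 = 0) ∧
      ∀ i j, i < j → ⟪q i, b j⟫_𝕜 = 0 := by
  set W : Fin N → Submodule 𝕜 E := fun k => (span 𝕜 (b '' Set.Ioi k))ᗮ
  have hWmono : Monotone W := fun k l hkl =>
    orthogonal_le (span_mono (Set.image_mono (Set.Ioi_subset_Ioi hkl)))
  have ha : ∀ k, a k ∈ W k := fun k => by
    refine isOrtho_iff_le.1 (isOrtho_span.2 ?_) (mem_span_singleton_self (a k))
    rintro _ rfl _ ⟨m, hm, rfl⟩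
    exact hab k m hm
  have hW : ∀ k, (Finset.Iio k).card < finrank 𝕜 (W k) := fun k => by
    have hb : finrank 𝕜 (span 𝕜 (b '' Set.Ioi k)) ≤ N - 1 - k := by
      classical
      rw [← Fin.card_Ioi, ← Finset.coe_Ioi, ← Finset.coe_image]
      exact (finrank_span_finset_le_card _).trans Finset.card_image_le
    have := finrank_add_finrank_orthogonal (span 𝕜 (b '' Set.Ioi k))
    rw [Fin.card_Iio]
    change _ < finrank 𝕜 (span 𝕜 (b '' Set.Ioi k))ᗮ
    omega
  obtain ⟨q, hq, hqW, haq⟩ := exists_orthonormal_mem_and_mem_span_Iic hWmono ha hW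
  refine ⟨q, hq, fun i j hji => ?_, fun i j hij => ?_⟩
  · have hortho : span 𝕜 {q i} ⟂ span 𝕜 (q '' Set.Iic j) := by
      refine isOrtho_span.2 ?_
      rintro _ rfl _ ⟨l, hl, rfl⟩
      exact hq.2 (hl.trans_lt hji).ne'
    exact inner_left_of_mem_orthogonal (haq j) (hortho (mem_span_singleton_self _))
  · exact inner_left_of_mem_orthogonal (subset_span (Set.mem_image_of_mem b hij)) (hqW i)

end InnerProductSpace

namespace Matrix

theorem BlockTriangular.conjTranspose {m α R : Type*} [LT α] [AddMonoid R] [StarAddMonoid R]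
    {M : Matrix m m R} {b : m → α} (hM : M.BlockTriangular b) :
    Mᴴ.BlockTriangular (OrderDual.toDual ∘ b) := fun i j hij => by
  rw [conjTranspose_apply, hM hij, star_zero]

variable {m n 𝕜 : Type*} [Fintype m] [RCLike 𝕜]

theorem conjTranspose_mul_apply_eq_inner (M A : Matrix m n 𝕜) (i j : n) :
    (Mᴴ * A) i j = ⟪WithLp.toLp 2 (Mᵀ i), WithLp.toLp 2 (Aᵀ j)⟫_𝕜 := by
  simp [mul_apply, EuclideanSpace.inner_toLp_toLp, dotProduct, mul_comm]

theorem mem_unitaryGroup_iff_orthonormal_columns [DecidableEq m] (Q : Matrix m m 𝕜) :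
    Q ∈ unitaryGroup m 𝕜 ↔ Orthonormal 𝕜 fun i => WithLp.toLp 2 (Qᵀ i) := by
  rw [mem_unitaryGroup_iff', orthonormal_iff_ite, star_eq_conjTranspose, ← Matrix.ext_iff]
  simp only [conjTranspose_mul_apply_eq_inner, one_apply]

theorem conjTranspose_mul_conjTranspose_mul_of_mem_unitaryGroup [DecidableEq m]
    {Q : Matrix m m 𝕜} (hQ : Q ∈ unitaryGroup m 𝕜) (A B : Matrix m n 𝕜) :
    (Qᴴ * A)ᴴ * (Qᴴ * B) = Aᴴ * B := by
  rw [conjTranspose_mul, conjTranspose_conjTranspose, Matrix.mul_assoc, ← Matrix.mul_assoc Q,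
    ← star_eq_conjTranspose, mem_unitaryGroup_iff.1 hQ, Matrix.one_mul]

end Matrix

theorem simultaneous_triangularization (N : ℕ)
    (A B : Matrix (Fin N) (Fin N) ℂ) :
    (∀ i j : Fin N, i < j → (Aᴴ * B) i j = 0) ↔
      ∃ Q ∈ Matrix.unitaryGroup (Fin N) ℂ,
        (∀ i j : Fin N, j < i → (Qᴴ * A) i j = 0) ∧
        (∀ i j : Fin N, i < j → (Qᴴ * B) i j = 0) := by
  constructor
  · intro hAB
    simp only [conjTranspose_mul_apply_eq_inner] at hAB ⊢
    obtain ⟨q, hq, hqA, hqB⟩ := exists_orthonormal_inner_triangular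
      (finrank_euclideanSpace_fin (𝕜 := ℂ)).ge _ _ hAB
    refine ⟨(of fun i => (q i).ofLp)ᵀ, ?_, hqA, hqB⟩
    rw [mem_unitaryGroup_iff_orthonormal_columns]
    exact hq
  · rintro ⟨Q, hQ, hA, hB⟩
    rw [← conjTranspose_mul_conjTranspose_mul_of_mem_unitaryGroup hQ]
    exact (BlockTriangular.conjTranspose (b := id) hA).mul hB
end

section
/- Let P(z), Q(z) be complex polynomials of degree at most n with |P(z)|² + |Q(z)|² = 1 for all z on the unit circle, with n ≥ 1. Then there exists a 2×2 unitary matrix A such that the vector (P'(z), Q'(z))ᵀ := diag(1, z⁻¹) A† (P(z), Q(z))ᵀ consists of polynomials of degree at most n−1 satisfying |P'|² + |Q'|² = 1 on the unit circle. -/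
/-!
On the unit circle `z̄ = z⁻¹`, so `zⁿ (|P|² + |Q|²) = P P̃ + Q Q̃` where `P̃ = zⁿ P̄(1/z)` is
again a polynomial of degree at most `n`. Since the left side is `zⁿ`, comparing the coefficients
of `z²ⁿ` shows that the leading vector `(Pₙ, Qₙ)` is orthogonal to the constant vector `(P₀, Q₀)`.
Hence there is a unitary `A` whose first column is orthogonal to `(Pₙ, Qₙ)` and whose second
column is orthogonal to `(P₀, Q₀)`: the first entry of `A† (P, Q)` then has degree `< n`, and the
second vanishes at `0`, so it is divisible by `z`. Unitarity preserves `|P|² + |Q|²`.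
-/

open Matrix Polynomial

theorem infinite_setOf_norm_eq_one : {z : ℂ | ‖z‖ = 1}.Infinite := by
  have hrank : 1 < Module.rank ℝ ℂ := by rw [Complex.rank_real_complex]; norm_num
  simpa [Metric.sphere, dist_zero_right] using
    (isPreconnected_sphere hrank (0 : ℂ) 1).infinite_of_nontrivial
      ⟨1, by simp, -1, by simp, by norm_num⟩

theorem eval_reflect_map_conj {n : ℕ} {P : ℂ[X]} (hP : P.natDegree ≤ n) {z : ℂ} (hz : ‖z‖ = 1) :
    (reflect n (P.map (starRingEnd ℂ))).eval z = z ^ n * starRingEnd ℂ (P.eval z) := by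
  have : Invertible z⁻¹ := invertibleOfNonzero (by simp [← norm_ne_zero_iff, hz])
  have h := eval₂_reflect_mul_pow (RingHom.id ℂ) z⁻¹ n (P.map (starRingEnd ℂ))
    (natDegree_map_le.trans hP)
  rw [invOf_eq_inv, inv_inv, Complex.inv_eq_conj hz, eval₂_id, eval₂_id, eval_map_apply] at h
  rw [← h, mul_left_comm, ← mul_pow, Complex.mul_conj', hz]
  simp

theorem star_coeff_zero_dotProduct_coeff_eq_zero {ι : Type*} [Fintype ι] {n : ℕ} (hn : n ≠ 0)
    {V : ι → ℂ[X]} (hV : ∀ i, (V i).natDegree ≤ n) {c : ℝ}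
    (hconst : ∀ z : ℂ, ‖z‖ = 1 → ∑ i, ‖(V i).eval z‖ ^ 2 = c) :
    star (fun i => (V i).coeff 0) ⬝ᵥ (fun i => (V i).coeff n) = 0 := by
  have hpoly : ∑ i, V i * reflect n ((V i).map (starRingEnd ℂ)) = C (c : ℂ) * X ^ n := by
    refine eq_of_infinite_eval_eq _ _ (infinite_setOf_norm_eq_one.mono fun z hz => ?_)
    simp only [Set.mem_ofPred_eq] at hz ⊢
    simp only [eval_finsetSum, eval_mul, eval_reflect_map_conj (hV _) hz, eval_C, eval_pow,
      eval_X, mul_left_comm _ (z ^ n), Complex.mul_conj', ← Finset.mul_sum]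
    rw [← hconst z hz]
    push_cast
    ring
  have hdeg i : (reflect n ((V i).map (starRingEnd ℂ))).natDegree ≤ n :=
    natDegree_reflect_le.trans (max_le le_rfl (natDegree_map_le.trans (hV i)))
  have hcoeff := congrArg (coeff · (n + n)) hpoly
  simp only [finsetSum_coeff, coeff_mul_add_eq_of_natDegree_le (hV _) (hdeg _),
    coeff_reflect, revAt_le le_rfl, Nat.sub_self, coeff_map, coeff_C_mul, coeff_X_pow] at hcoeff
  simpa [dotProduct, mul_comm, hn] using hcoeff

theorem mem_unitaryGroup_of_star_mul_self_add {R : Type*} [CommRing R] [StarRing R] {a b : R}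
    (h : star a * a + star b * b = 1) :
    !![a, -star b; b, star a] ∈ unitaryGroup (Fin 2) R := by
  rw [mem_unitaryGroup_iff']
  ext i j
  fin_cases i <;> fin_cases j <;>
    simp [Matrix.mul_apply, Fin.sum_univ_two] <;> first | ring1 | linear_combination h

theorem exists_unit_orthogonal_and_parallel (u v : Fin 2 → ℂ) (huv : star v ⬝ᵥ u = 0) :
    ∃ a b : ℂ, star a * a + star b * b = 1 ∧ star a * u 0 + star b * u 1 = 0 ∧
      a * v 1 = b * v 0 := by
  obtain ⟨w, hw, hwu, hwv⟩ :
      ∃ w : Fin 2 → ℂ, w ≠ 0 ∧ star w ⬝ᵥ u = 0 ∧ w 0 * v 1 = w 1 * v 0 := by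
    by_cases hv : v = 0
    · by_cases hu : u = 0
      · exact ⟨![1, 0], by simp, by simp [hu], by simp [hv]⟩
      refine ⟨![-star (u 1), star (u 0)], ?_, ?_, by simp [hv]⟩
      · contrapose! hu
        simp [funext_iff, Fin.forall_fin_two] at hu ⊢
        tauto
      · simp [dotProduct, Fin.sum_univ_two]; ring
    · exact ⟨v, hv, huv, mul_comm _ _⟩
  set r := ‖WithLp.toLp 2 w‖
  have hr : (r : ℂ) ≠ 0 := by simpa [r] using hw
  have hr2 : (r : ℂ) ^ 2 = ‖w 0‖ ^ 2 + ‖w 1‖ ^ 2 := by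
    rw [← Complex.ofReal_pow, EuclideanSpace.norm_sq_eq]
    simp [Fin.sum_univ_two]
  refine ⟨w 0 / r, w 1 / r, ?_, ?_, ?_⟩
  · simp only [star_div₀, Complex.star_def, Complex.conj_ofReal]
    field_simp
    simp [Complex.conj_mul', hr2]
  · simp only [star_div₀, Complex.star_def, Complex.conj_ofReal]
    field_simp
    simpa [dotProduct, Fin.sum_univ_two] using hwu
  · field_simp
    exact hwv

theorem exists_mem_unitaryGroup_conjTranspose_mulVec_eq_zero (u v : Fin 2 → ℂ)
    (huv : star v ⬝ᵥ u = 0) :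
    ∃ A ∈ unitaryGroup (Fin 2) ℂ, (Aᴴ *ᵥ u) 0 = 0 ∧ (Aᴴ *ᵥ v) 1 = 0 := by
  obtain ⟨a, b, hab, hu, hv⟩ := exists_unit_orthogonal_and_parallel u v huv
  refine ⟨_, mem_unitaryGroup_of_star_mul_self_add hab, ?_, ?_⟩
  · simpa [mulVec, dotProduct, Fin.sum_univ_two] using hu
  · simp [mulVec, dotProduct, Fin.sum_univ_two]
    linear_combination hv

theorem sum_norm_sq_mulVec_of_mem_unitaryGroup {ι : Type*} [Fintype ι] [DecidableEq ι]
    {A : Matrix ι ι ℂ} (hA : A ∈ unitaryGroup ι ℂ) (x : ι → ℂ) :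
    ∑ i, ‖(A *ᵥ x) i‖ ^ 2 = ∑ i, ‖x i‖ ^ 2 := by
  have h : star (A *ᵥ x) ⬝ᵥ (A *ᵥ x) = star x ⬝ᵥ x := by
    rw [star_mulVec, dotProduct_mulVec, vecMul_vecMul, ← star_eq_conjTranspose,
      (mem_unitaryGroup_iff').1 hA, vecMul_one]
  simp only [dotProduct, Pi.star_apply, Complex.star_def, Complex.conj_mul'] at h
  exact_mod_cast h

section MulVecMapC

variable {R : Type*} [CommSemiring R] {ι κ : Type*} [Fintype κ]

theorem eval_mulVec_map_C (M : Matrix ι κ R) (V : κ → R[X]) (z : R) (i : ι) :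
    ((M.map C *ᵥ V) i).eval z = (M *ᵥ fun j => (V j).eval z) i := by
  simp [mulVec, dotProduct, eval_finsetSum]

theorem coeff_mulVec_map_C (M : Matrix ι κ R) (V : κ → R[X]) (k : ℕ) (i : ι) :
    ((M.map C *ᵥ V) i).coeff k = (M *ᵥ fun j => (V j).coeff k) i := by
  simp [mulVec, dotProduct, finsetSum_coeff]

theorem natDegree_mulVec_map_C_le (M : Matrix ι κ R) {V : κ → R[X]} {n : ℕ}
    (hV : ∀ j, (V j).natDegree ≤ n) (i : ι) : ((M.map C *ᵥ V) i).natDegree ≤ n :=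
  natDegree_sum_le_of_forall_le _ _ fun j _ => (natDegree_C_mul_le _ _).trans (hV j)

end MulVecMapC

theorem eval_divX_of_coeff_zero_eq_zero {K : Type*} [Field K] {p : K[X]} (hp : p.coeff 0 = 0)
    {z : K} (hz : z ≠ 0) : p.divX.eval z = z⁻¹ * p.eval z := by
  conv_rhs => rw [← divX_mul_X_add p, hp]
  simp only [map_zero, add_zero, eval_mul, eval_X]
  rw [mul_comm, mul_inv_cancel_right₀ hz]

theorem single_step_reduction (n : ℕ) (hn : 1 ≤ n) (P Q : Polynomial ℂ)
    (hP : P.natDegree ≤ n) (hQ : Q.natDegree ≤ n)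
    (hnorm : ∀ z : ℂ, ‖z‖ = 1 →
      ‖P.eval z‖ ^ 2 + ‖Q.eval z‖ ^ 2 = 1) :
    ∃ A ∈ Matrix.unitaryGroup (Fin 2) ℂ, ∃ P' Q' : Polynomial ℂ,
      P'.natDegree ≤ n - 1 ∧ Q'.natDegree ≤ n - 1 ∧
      (∀ z : ℂ, ‖z‖ = 1 →
        ‖P'.eval z‖ ^ 2 + ‖Q'.eval z‖ ^ 2 = 1) ∧
      (∀ z : ℂ, ‖z‖ = 1 →
        P'.eval z = (Aᴴ.mulVec ![P.eval z, Q.eval z]) 0 ∧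
        Q'.eval z = z⁻¹ * (Aᴴ.mulVec ![P.eval z, Q.eval z]) 1) := by
  set V : Fin 2 → ℂ[X] := ![P, Q]
  have hV : ∀ i, (V i).natDegree ≤ n := Fin.forall_fin_two.2 ⟨hP, hQ⟩
  obtain ⟨A, hA, htop, hbot⟩ := exists_mem_unitaryGroup_conjTranspose_mulVec_eq_zero _ _
    (star_coeff_zero_dotProduct_coeff_eq_zero (by omega) hV (c := 1) fun z hz => by
      simpa [Fin.sum_univ_two, V] using hnorm z hz)
  set W := Aᴴ.map C *ᵥ V
  have hWdeg := natDegree_mulVec_map_C_le Aᴴ hV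
  have hWeval z i : (W i).eval z = (Aᴴ *ᵥ ![P.eval z, Q.eval z]) i := by
    rw [eval_mulVec_map_C]
    congr
    funext j
    fin_cases j <;> rfl
  have hW1eval z (hz : ‖z‖ = 1) :
      (W 1).divX.eval z = z⁻¹ * (Aᴴ *ᵥ ![P.eval z, Q.eval z]) 1 := by
    have hz0 : z ≠ 0 := by simp [← norm_ne_zero_iff, hz]
    rw [eval_divX_of_coeff_zero_eq_zero (by rwa [coeff_mulVec_map_C]) hz0, hWeval]
  refine ⟨A, hA, W 0, (W 1).divX, natDegree_le_pred (hWdeg 0) (by rwa [coeff_mulVec_map_C]),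
    ?_, fun z hz => ?_, fun z hz => ⟨hWeval z 0, hW1eval z hz⟩⟩
  · rw [natDegree_divX_eq_natDegree_tsub_one]
    exact Nat.sub_le_sub_right (hWdeg 1) 1
  · rw [hWeval, hW1eval z hz, norm_mul, norm_inv, hz, inv_one, one_mul, ← hnorm z hz]
    simpa [Fin.sum_univ_two] using
      sum_norm_sq_mulVec_of_mem_unitaryGroup (Unitary.star_mem hA) ![P.eval z, Q.eval z]
end

section
/- One-step exponential QSP: Let γ(z) = ∑_{k=0}^{d−1} γ_k z^k be a ℂ^d-valued polynomial with ‖γ(z)‖ = 1 for all z on the unit circle. There exist unitaries A_0, A_1 ∈ U(d) with A_1 W_d A_0 e_0 = γ(z) for all |z| = 1, where W_d = diag(1, z, z², …, z^{d−1}), if and only if the coefficient vectors γ_0, …, γ_{d−1} are pairwise orthogonal. -/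
/-!
Let `Γ` be the matrix whose columns are the coefficient vectors `γ k`. Since
`A₁ W_d A₀ e₀ = ∑ k, z ^ k • (A₀ k 0) • A₁ e_k` and a polynomial vanishing on the unit circle is
zero, the representation holds exactly when `Γ = A₁ * diagonal (A₀ e₀)`; then `Γᴴ Γ` is diagonal,
i.e. the `γ k` are orthogonal. Conversely, extending the normalized nonzero `γ k` to an
orthonormal basis writes `Γ = U * diagonal w` with `U` unitary; evaluating at `z = 1` shows that
`w` is a unit vector, hence the first column of a unitary `A₀`.
-/

open Matrix

theorem Complex.sphere_zero_one_infinite : (Metric.sphere (0 : ℂ) 1).Infinite :=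
  (isPreconnected_sphere (by simp [Complex.rank_real_complex]) 0 1).infinite_of_nontrivial
    ⟨1, by simp, -1, by simp, by norm_num⟩

theorem eq_zero_of_dotProduct_powers_eq_zero_on_circle {n : ℕ} {v : Fin n → ℂ}
    (h : ∀ z : ℂ, ‖z‖ = 1 → v ⬝ᵥ (fun k : Fin n => z ^ (k : ℕ)) = 0) : v = 0 := by
  have hroot : Metric.sphere (0 : ℂ) 1 ⊆ {z | (Polynomial.ofFn n v).IsRoot z} := fun z hz => by
    simpa [Polynomial.ofFn_eq_sum_monomial, Polynomial.eval_finsetSum, dotProduct] using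
      h z (mem_sphere_zero_iff_norm.mp hz)
  have := Polynomial.eq_zero_of_infinite_isRoot _ (Complex.sphere_zero_one_infinite.mono hroot)
  exact Polynomial.injective_ofFn n (this.trans (map_zero _).symm)

theorem Matrix.mulVec_powers_eq_on_circle_iff {m : Type*} {n : ℕ} {M N : Matrix m (Fin n) ℂ} :
    (∀ z : ℂ, ‖z‖ = 1 →
      M *ᵥ (fun k : Fin n => z ^ (k : ℕ)) = N *ᵥ (fun k : Fin n => z ^ (k : ℕ))) ↔ M = N := by
  refine ⟨fun h => ?_, fun h _ _ => h ▸ rfl⟩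
  ext i k
  have hrow : M i - N i = 0 := eq_zero_of_dotProduct_powers_eq_zero_on_circle fun z hz => by
    rw [sub_dotProduct, sub_eq_zero]
    exact congrFun (h z hz) i
  exact sub_eq_zero.mp (congrFun hrow k)

theorem Matrix.mul_diagonal_mul_mulVec_single_one {l m n R : Type*} [Fintype m] [Fintype n]
    [DecidableEq m] [DecidableEq n] [CommSemiring R]
    (A : Matrix l m R) (v : m → R) (B : Matrix m n R) (j : n) :
    (A * diagonal v * B) *ᵥ Pi.single j 1 = (A * diagonal (B.col j)) *ᵥ v := by
  rw [← mulVec_mulVec, mulVec_single_one, ← mulVec_mulVec, ← mulVec_mulVec]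
  congr 1
  ext k
  simp only [mulVec_diagonal, mul_comm]

theorem Matrix.conjTranspose_mul_self_mul_diagonal_of_mem_unitaryGroup {n 𝕜 : Type*} [Fintype n]
    [DecidableEq n] [CommRing 𝕜] [StarRing 𝕜] {U : Matrix n n 𝕜}
    (hU : U ∈ unitaryGroup n 𝕜) (w : n → 𝕜) :
    (U * diagonal w)ᴴ * (U * diagonal w) = diagonal (star w * w) := by
  rw [conjTranspose_mul, diagonal_conjTranspose, Matrix.mul_assoc, ← Matrix.mul_assoc Uᴴ,
    ← star_eq_conjTranspose, mem_unitaryGroup_iff'.mp hU, Matrix.one_mul, diagonal_mul_diagonal]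
  rfl

section RCLike

variable {𝕜 E ι : Type*} [RCLike 𝕜] [NormedAddCommGroup E] [InnerProductSpace 𝕜 E]
  [Fintype ι]

theorem exists_orthonormalBasis_smul_eq_of_pairwise_inner_eq_zero [FiniteDimensional 𝕜 E]
    {v : ι → E} (hcard : Module.finrank 𝕜 E = Fintype.card ι)
    (hv : Pairwise fun j k => inner 𝕜 (v j) (v k) = 0) :
    ∃ b : OrthonormalBasis ι 𝕜 E, ∀ k, v k = (‖v k‖ : 𝕜) • b k := by
  have hnormed : Orthonormal 𝕜
      ({k | v k ≠ 0}.domRestrict fun k => (‖v k‖⁻¹ : 𝕜) • v k) := by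
    refine ⟨fun k => norm_smul_inv_norm k.2, fun j k hjk => ?_⟩
    simp only [Set.domRestrict_apply, inner_smul_left, inner_smul_right,
      hv (Subtype.coe_ne_coe.mpr hjk), mul_zero]
  obtain ⟨b, hb⟩ := hnormed.exists_orthonormalBasis_extension_of_card_eq hcard
  refine ⟨b, fun k => ?_⟩
  by_cases hk : v k = 0
  · simp [hk]
  rw [hb k hk, smul_smul, mul_inv_cancel₀ (by simpa using hk), one_smul]

variable [DecidableEq ι]

theorem OrthonormalBasis.exists_mem_unitaryGroup_apply_eq
    (b : OrthonormalBasis ι 𝕜 (EuclideanSpace 𝕜 ι)) :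
    ∃ U ∈ unitaryGroup ι 𝕜, ∀ i k, U i k = b k i :=
  ⟨_, (EuclideanSpace.basisFun ι 𝕜).toMatrix_orthonormalBasis_mem_unitary b, fun _ _ => rfl⟩

theorem Matrix.exists_mem_unitaryGroup_mul_diagonal_eq {Γ : Matrix ι ι 𝕜}
    (hΓ : Pairwise fun j k => (Γᴴ * Γ) j k = 0) :
    ∃ U ∈ unitaryGroup ι 𝕜, ∃ w : ι → 𝕜, U * diagonal w = Γ := by
  obtain ⟨b, hb⟩ := exists_orthonormalBasis_smul_eq_of_pairwise_inner_eq_zero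
    (𝕜 := 𝕜) (v := fun k => WithLp.toLp 2 (Γ.col k)) (by simp)
      fun _ _ hjk => (dotProduct_comm _ _).trans (hΓ hjk)
  obtain ⟨U, hU, hUb⟩ := b.exists_mem_unitaryGroup_apply_eq
  refine ⟨U, hU, fun k => ‖WithLp.toLp 2 (Γ.col k)‖, ?_⟩
  ext i k
  rw [mul_diagonal, hUb, mul_comm]
  exact (congrFun (congrArg WithLp.ofLp (hb k)) i).symm

theorem Matrix.norm_toLp_mulVec_of_mem_unitaryGroup {U : Matrix ι ι 𝕜}
    (hU : U ∈ unitaryGroup ι 𝕜) (w : ι → 𝕜) :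
    ‖WithLp.toLp 2 (U *ᵥ w)‖ = ‖WithLp.toLp 2 w‖ := by
  have hinner : inner 𝕜 (WithLp.toLp 2 (U *ᵥ w)) (WithLp.toLp 2 (U *ᵥ w)) =
      inner 𝕜 (WithLp.toLp 2 w) (WithLp.toLp 2 w) := by
    rw [EuclideanSpace.inner_toLp_toLp, EuclideanSpace.inner_toLp_toLp, star_mulVec,
      dotProduct_comm, ← dotProduct_mulVec, mulVec_mulVec, ← star_eq_conjTranspose,
      mem_unitaryGroup_iff'.mp hU, one_mulVec, dotProduct_comm]
  rw [norm_eq_sqrt_re_inner (𝕜 := 𝕜), hinner, ← norm_eq_sqrt_re_inner]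

theorem Matrix.exists_mem_unitaryGroup_col_eq {w : ι → 𝕜} (hw : ‖WithLp.toLp 2 w‖ = 1)
    (j : ι) : ∃ U ∈ unitaryGroup ι 𝕜, U.col j = w := by
  have hunit : Orthonormal 𝕜 (({j} : Set ι).domRestrict fun _ => WithLp.toLp 2 w) :=
    orthonormal_subsingleton_iff.mpr fun _ => hw
  obtain ⟨b, hb⟩ := hunit.exists_orthonormalBasis_extension_of_card_eq (by simp)
  obtain ⟨U, hU, hUb⟩ := b.exists_mem_unitaryGroup_apply_eq
  refine ⟨U, hU, funext fun i => ?_⟩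
  rw [col_apply, hUb, hb j rfl]

end RCLike

theorem one_step_exponential_qsp (d : ℕ) (hd : 1 ≤ d)
    (γ : Fin d → Fin d → ℂ)
    (hstate : ∀ z : ℂ, ‖z‖ = 1 →
      ∑ i : Fin d, ‖∑ k : Fin d, γ k i * z ^ (k : ℕ)‖ ^ 2 = 1) :
    (∃ A₀ ∈ Matrix.unitaryGroup (Fin d) ℂ, ∃ A₁ ∈ Matrix.unitaryGroup (Fin d) ℂ,
        ∀ z : ℂ, ‖z‖ = 1 →
          (A₁ * Matrix.diagonal (fun i : Fin d => z ^ (i : ℕ)) * A₀).mulVec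
              (fun i : Fin d => if (i : ℕ) = 0 then 1 else 0) =
            fun i : Fin d => ∑ k : Fin d, γ k i * z ^ (k : ℕ)) ↔
      (∀ j k : Fin d, j ≠ k → ∑ i : Fin d, (starRingEnd ℂ) (γ j i) * γ k i = 0) := by
  set Γ : Matrix (Fin d) (Fin d) ℂ := Matrix.of fun i k => γ k i
  have he₀ : (fun i : Fin d => if (i : ℕ) = 0 then (1 : ℂ) else 0) = Pi.single ⟨0, hd⟩ 1 := by
    ext i
    simp [Pi.single_apply, Fin.ext_iff]
  have hγ (z : ℂ) : (fun i => ∑ k, γ k i * z ^ (k : ℕ)) = Γ *ᵥ fun k => z ^ (k : ℕ) := rfl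
  have hgram (j k : Fin d) : ∑ i, (starRingEnd ℂ) (γ j i) * γ k i = (Γᴴ * Γ) j k := rfl
  simp only [he₀, hγ, mul_diagonal_mul_mulVec_single_one, mulVec_powers_eq_on_circle_iff, hgram]
  constructor
  · rintro ⟨A₀, -, A₁, hA₁, hΓ⟩ j k hjk
    rw [← hΓ, conjTranspose_mul_self_mul_diagonal_of_mem_unitaryGroup hA₁, diagonal_apply_ne _ hjk]
  · intro hΓ
    obtain ⟨U, hU, w, hUw⟩ := exists_mem_unitaryGroup_mul_diagonal_eq fun _ _ hjk => hΓ _ _ hjk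
    have hw : ‖WithLp.toLp 2 w‖ = 1 := by
      have h1 : ‖WithLp.toLp 2 (Γ *ᵥ fun k => (1 : ℂ) ^ (k : ℕ))‖ ^ 2 = 1 := by
        rw [EuclideanSpace.norm_sq_eq]
        exact hstate 1 (by simp)
      have hdiag : (diagonal w *ᵥ fun _ => 1) = w := funext fun k => by
        rw [mulVec_diagonal, mul_one]
      simp only [one_pow, ← hUw, ← mulVec_mulVec, norm_toLp_mulVec_of_mem_unitaryGroup hU,
        hdiag] at h1
      exact (pow_eq_one_iff_of_nonneg (norm_nonneg _) two_ne_zero).mp h1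
    obtain ⟨A₀, hA₀, hA₀w⟩ := exists_mem_unitaryGroup_col_eq hw ⟨0, hd⟩
    exact ⟨A₀, hA₀, U, hU, hA₀w ▸ hUw⟩
end

section
/- Discrete–continuous Fourier duality for wrapped functions: Let f : ℝ → ℂ be a Schwartz function, N a positive integer, and T, W > 0 with TW = 2πN. Define the T-wrapping f^{(T)}(x) = ∑_{n∈ℤ} f(x + nT) and the continuous Fourier transform f̂(p) = (1/√(2π)) ∫_ℝ f(x) e^{−ipx} dx. Then for every k ∈ ℤ/Nℤ: √T · (1/√N) ∑_{y=0}^{N−1} f^{(T)}(yT/N) ω_N^{−ky} = √W · f̂^{(W)}(kW/N), where ω_N = e^{2πi/N}. -/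
open Complex MeasureTheory

/-- Periodization (`T`-wrapping) of a function `f : ℝ → ℂ`. -/
noncomputable def wrap (T : ℝ) (f : ℝ → ℂ) (x : ℝ) : ℂ :=
  ∑' n : ℤ, f (x + n * T)

/-- Continuous Fourier transform with the symmetric convention. -/
noncomputable def fourierCT (f : ℝ → ℂ) (p : ℝ) : ℂ :=
  (1 / Real.sqrt (2 * Real.pi)) * ∫ x : ℝ, f x * Complex.exp (-(Complex.I * p * x))

/-! With `g x = f (x T)`, Poisson summation for `g` expands the samples `f^{(T)} (y T / N)` as the
Fourier series `∑ₘ ĝ m e^{2πi m y / N}`. Taking the `N`-point DFT at `k` keeps, by orthogonality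
of the characters of `ℤ/N`, exactly the coefficients with `m = k + j N`; and `ĝ (k + j N)` is a
multiple of `f̂ (k W / N + j W)`, because `2π / T = W / N`. Summing over `j` gives the
`W`-periodization of `f̂`. -/

open FourierTransform Real
open scoped SchwartzMap

theorem Complex.sum_range_exp_two_pi_mul_I_mul_div {N : ℕ} (hN : N ≠ 0) (j : ℤ) :
    ∑ y ∈ Finset.range N, exp (2 * π * I * j * y / N) = if (N : ℤ) ∣ j then (N : ℂ) else 0 := by
  have hζ := isPrimitiveRoot_exp N hN
  have hpow (y : ℕ) : exp (2 * π * I * j * y / N) = (exp (2 * π * I / N) ^ j) ^ y := by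
    rw [← exp_int_mul, ← exp_nat_mul]
    ring_nf
  simp_rw [hpow]
  split_ifs with hdvd
  · simp [(hζ.zpow_eq_one_iff_dvd j).mpr hdvd]
  · have hz : exp (2 * π * I / N) ^ j ≠ 1 := fun h => hdvd ((hζ.zpow_eq_one_iff_dvd j).mp h)
    have hzN : (exp (2 * π * I / N) ^ j) ^ N = 1 := by
      rw [← zpow_natCast, ← zpow_mul, mul_comm j, zpow_mul, zpow_natCast, hζ.pow_eq_one, one_zpow]
    rw [geom_sum_eq hz, hzN, sub_self, zero_div]

theorem sum_range_tsum_mul_exp_mul_exp_neg {c : ℤ → ℂ} (hc : Summable c) {N : ℕ} (hN : N ≠ 0)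
    (k : ℤ) :
    ∑ y ∈ Finset.range N,
        (∑' m : ℤ, c m * exp (2 * π * I * m * y / N)) * exp (-(2 * π * I * k * y / N)) =
      N * ∑' j : ℤ, c (k + j * N) := by
  have hshift (y : ℕ) : (∑' m : ℤ, c m * exp (2 * π * I * m * y / N)) *
      exp (-(2 * π * I * k * y / N)) = ∑' m : ℤ, c m * exp (2 * π * I * (m - k : ℤ) * y / N) := by
    rw [← tsum_mul_right]
    congr 1 with m
    rw [mul_assoc, ← Complex.exp_add]
    push_cast
    ring_nf
  have hsummable (y : ℕ) :
      Summable fun m : ℤ => c m * exp (2 * π * I * (m - k : ℤ) * y / N) :=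
    (summable_norm_iff.mpr hc).of_norm_bounded fun m => by
      rw [norm_mul, show 2 * π * I * (m - k : ℤ) * y / N = (2 * π * (m - k : ℤ) * y / N : ℝ) * I
        by push_cast; ring, norm_exp_ofReal_mul_I, mul_one]
  have hinj : Function.Injective fun j : ℤ => k + j * N := fun a b hab =>
    mul_right_cancel₀ (Int.natCast_ne_zero.mpr hN) (add_left_cancel hab)
  have hsupp : (Function.support fun m : ℤ => c m * if (N : ℤ) ∣ m - k then (N : ℂ) else 0) ⊆
      Set.range fun j : ℤ => k + j * N := fun m hm => by
    obtain ⟨j, hj⟩ : (N : ℤ) ∣ m - k := by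
      by_contra h
      simp [h] at hm
    exact ⟨j, by linear_combination -hj⟩
  calc _ = ∑' m : ℤ, ∑ y ∈ Finset.range N, c m * exp (2 * π * I * (m - k : ℤ) * y / N) := by
        simp_rw [hshift]
        exact (Summable.tsum_finsetSum fun y _ => hsummable y).symm
    _ = ∑' m : ℤ, c m * if (N : ℤ) ∣ m - k then (N : ℂ) else 0 := by
        simp_rw [← Finset.mul_sum, sum_range_exp_two_pi_mul_I_mul_div hN]
    _ = ∑' j : ℤ, c (k + j * N) * N := by
        rw [← hinj.tsum_eq hsupp]
        simp
    _ = _ := by rw [tsum_mul_right, mul_comm]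

theorem Real.fourier_comp_mul_right {E : Type*} [NormedAddCommGroup E] [NormedSpace ℂ E]
    (f : ℝ → E) {T : ℝ} (hT : T ≠ 0) (w : ℝ) :
    𝓕 (fun x => f (x * T)) w = |T⁻¹| • 𝓕 f (w / T) := by
  simp_rw [fourier_real_eq]
  rw [← Measure.integral_comp_mul_right (fun v => 𝐞 (-(v * (w / T))) • f v) T]
  congr 2 with v
  field_simp

theorem fourierCT_eq_fourier (f : ℝ → ℂ) (p : ℝ) :
    fourierCT f p = (√(2 * π) : ℂ)⁻¹ * 𝓕 f (p / (2 * π)) := by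
  rw [fourierCT, fourier_real_eq_integral_exp_smul, one_div]
  congr 1
  refine integral_congr_ae (.of_forall fun v => ?_)
  simp only [smul_eq_mul]
  rw [mul_comm]
  congr 1
  push_cast
  field_simp

namespace SchwartzMap

variable {E : Type*} [NormedAddCommGroup E] [NormedSpace ℝ E]

noncomputable def compMulRight (f : 𝓢(ℝ, E)) {T : ℝ} (hT : T ≠ 0) : 𝓢(ℝ, E) :=
  compCLMOfContinuousLinearEquiv ℝ (ContinuousLinearEquiv.unitsEquivAut ℝ (Units.mk0 T hT)) f

@[simp]
theorem compMulRight_apply (f : 𝓢(ℝ, E)) {T : ℝ} (hT : T ≠ 0) (x : ℝ) :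
    f.compMulRight hT x = f (x * T) :=
  rfl

theorem summable_int [CompleteSpace E] (f : 𝓢(ℝ, E)) : Summable fun n : ℤ => f n :=
  summable_of_isBigO (summable_abs_int_rpow one_lt_two)
    ((f.isBigO_cocompact_rpow (-2)).comp_tendsto Int.tendsto_coe_cofinite)

theorem fourier_compMulRight_eq_fourierCT (f : 𝓢(ℝ, ℂ)) {T : ℝ} (hT : 0 < T) (w : ℝ) :
    𝓕 (f.compMulRight hT.ne') w = (T⁻¹ * √(2 * π) : ℂ) * fourierCT f (2 * π * w / T) := by
  have hπ : (√(2 * π) : ℂ) ≠ 0 := ofReal_ne_zero.mpr (by positivity)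
  rw [fourier_coe, fourierCT_eq_fourier]
  change 𝓕 (fun x => f (x * T)) w = _
  rw [Real.fourier_comp_mul_right _ hT.ne', abs_inv, abs_of_pos hT, real_smul]
  field_simp

end SchwartzMap

theorem wrap_eq_tsum_fourier_compMulRight (f : 𝓢(ℝ, ℂ)) {T : ℝ} (hT : T ≠ 0) (x : ℝ) :
    wrap T f x = ∑' m : ℤ, 𝓕 (f.compMulRight hT) m * exp (2 * π * I * m * x / T) := by
  have h := (f.compMulRight hT).tsum_eq_tsum_fourier (x / T)
  simp only [SchwartzMap.compMulRight_apply, fourier_coe_apply, add_mul, div_mul_cancel₀ x hT,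
    ofReal_div, ofReal_one, div_one] at h
  rw [wrap, h]
  simp_rw [mul_div_assoc]

theorem discrete_continuous_fourier_duality_general (f : SchwartzMap ℝ ℂ)
    (N : ℕ) (T W : ℝ) (hT : 0 < T)
    (hTW : T * W = 2 * Real.pi * N) (k : Fin N) :
    (Real.sqrt T : ℂ) * ((1 / Real.sqrt N : ℝ) *
        ∑ y ∈ Finset.range N,
          wrap T f (y * T / N) *
            Complex.exp (-(2 * Real.pi * Complex.I * (k : ℕ) * y / N))) =
      (Real.sqrt W : ℂ) * wrap W (fourierCT f) ((k : ℕ) * W / N) := by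
  have hN : N ≠ 0 := k.pos.ne'
  set g := f.compMulRight hT.ne'
  have hsamples (y : ℕ) :
      wrap T f (y * T / N) = ∑' m : ℤ, 𝓕 g m * exp (2 * π * I * m * y / N) := by
    have hT' : (T : ℂ) ≠ 0 := ofReal_ne_zero.mpr hT.ne'
    rw [wrap_eq_tsum_fourier_compMulRight f hT.ne']
    congr! 3
    push_cast
    field_simp
  have hcoeff (j : ℤ) : 𝓕 g (((k : ℕ) : ℤ) + j * N : ℤ) =
      (T⁻¹ * √(2 * π) : ℂ) * fourierCT f ((k : ℕ) * W / N + j * W) := by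
    rw [SchwartzMap.fourier_compMulRight_eq_fourierCT f hT]
    congr 2
    field_simp
    push_cast
    linear_combination -(((k : ℕ) : ℝ) + j * N) * hTW
  have hconst : √T * (1 / √N) * N * T⁻¹ * √(2 * π) = √W := by
    rw [eq_comm, Real.sqrt_eq_iff_mul_self_eq_of_pos (by positivity)]
    field_simp
    rw [Real.sq_sqrt hT.le, Real.sq_sqrt N.cast_nonneg, Real.sq_sqrt (by positivity)]
    linear_combination -(N * T) * hTW
  have halias := sum_range_tsum_mul_exp_mul_exp_neg (𝓕 g).summable_int hN (k : ℕ)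
  simp only [Int.cast_natCast] at halias
  simp_rw [hsamples, halias, wrap, hcoeff, tsum_mul_left, ← mul_assoc]
  congr 1
  exact_mod_cast hconst

theorem discrete_continuous_fourier_duality (f : SchwartzMap ℝ ℂ)
    (N : ℕ) (hN : 0 < N) (T W : ℝ) (hT : 0 < T) (hW : 0 < W)
    (hTW : T * W = 2 * Real.pi * N) (k : Fin N) :
    (Real.sqrt T : ℂ) * ((1 / Real.sqrt N : ℝ) *
        ∑ y ∈ Finset.range N,
          wrap T f (y * T / N) *
            Complex.exp (-(2 * Real.pi * Complex.I * (k : ℕ) * y / N))) =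
      (Real.sqrt W : ℂ) * wrap W (fourierCT f) ((k : ℕ) * W / N) :=
  discrete_continuous_fourier_duality_general f N T W hT hTW k
end
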